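/- For every integer k with 2 ≤ k ≤ d−1 there is a constant c > 0 depending only on d such that if the characteristic of F_q exceeds c, then the following equivalence holds: the (d−k)×d Jacobian matrix (∂h_j/∂x_i)(x) has rank d−k at every point x ∈ H̄_k with x ≠ 0 (i.e. H̄_k is smooth away from the origin) if and only if d−k ∈ {1, 2, 3}. -/

import Mathlib

open MvPolynomial

noncomputable section

/-- The homogeneous polynomial `h_{j+1}(x) = x_1^{j+2} + ⋯ + x_k^{j+2} − x_{k+j+1}^{j+2}`
(in 0-based indexing, `j : Fin (d-k)` corresponds to the defining equation `h_{j+1}`). -/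
def hpoly (K : Type) [CommRing K] (d k : ℕ) (j : Fin (d - k)) : MvPolynomial (Fin d) K :=
  (∑ i : Fin d, if (i : ℕ) < k then X i ^ ((j : ℕ) + 2) else 0)
    - X (⟨k + (j : ℕ), by have h := j.isLt; omega⟩ : Fin d) ^ ((j : ℕ) + 2)

/-- The homogeneous variety `H̄_k` as a set of points with coordinates in `K`. -/
def Hset (K : Type) [CommRing K] (d k : ℕ) : Set (Fin d → K) :=
  {x | ∀ j : Fin (d - k), eval x (hpoly K d k j) = 0}

open scoped Classical in
/-- The set of `F_q`-points of the homogeneous variety `H_k`, as a finite set. -/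
def Hfin (F : Type) [Field F] [Fintype F] (d k : ℕ) : Finset (Fin d → F) :=
  Finset.univ.filter fun x => ∀ j : Fin (d - k), eval x (hpoly F d k j) = 0

open scoped ENNReal in
/-- `L^p` norm with respect to the normalized counting measure on `F_q^d`. -/
def lpNorm {F : Type} [Fintype F] {d : ℕ} (p : ℝ≥0∞) (f : (Fin d → F) → ℂ) : ℝ :=
  if p = ⊤ then ⨆ x, ‖f x‖
  else (((Fintype.card F : ℝ) ^ d)⁻¹ * ∑ x, ‖f x‖ ^ p.toReal) ^ (1 / p.toReal)

/-- Convolution `f ∗ dσ` with the normalized surface measure on `V`. -/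
def convMeas {F : Type} [Field F] [Fintype F] {d : ℕ} (V : Finset (Fin d → F))
    (f : (Fin d → F) → ℂ) : (Fin d → F) → ℂ :=
  fun y => (V.card : ℂ)⁻¹ * ∑ x ∈ V, f (y - x)

end

/-- The `(d−k) × d` Jacobian matrix `(∂h_j/∂x_i)(x)` of the system defining `H̄_k`. -/
noncomputable def jacH (K : Type) [CommRing K] (d k : ℕ) (x : Fin d → K) :
    Matrix (Fin (d - k)) (Fin d) K :=
  Matrix.of fun j i => eval x (pderiv i (hpoly K d k j))


/-!
Let `g` be a linear relation among the rows of the Jacobian at `x ∈ H̄_k` (the row of `h_j` has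
entries `(j+1) x_i^j` for `i ≤ k` and `-(j+1) x_{k+j}^j` in column `k+j`). Column `k+j` gives
`g_j x_{k+j} = 0`, so whenever `g_j ≠ 0` the equation `h_j = 0` says that the power sum
`p_{j+1}(x_1, …, x_k)` vanishes; the first `k` columns say that `x_1, …, x_k` are roots of
`∑_j (j+1) g_j t^j`. If `d − k ≤ 3` this is `a t + b t² + c t³`, whose at most two nonzero roots
cannot carry vanishing power sums once the characteristic exceeds the multiplicities; hence
`x_1 = ⋯ = x_k = 0` and then `x = 0`. If `d − k ≥ 4`, complete `(1, −1, 0, …, 0)` to a point of `H̄_k`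
by roots of its power sums: its odd power sums vanish, so `x_{k+2} = x_{k+4} = 0`, and
`5 row(h_2) − 3 row(h_4) = 0` because `15 t² − 15 t⁴` vanishes on `{0, ±1}`.
-/

open Finset

theorem Nat.cast_ne_zero_of_lt_ringChar {R : Type*} [NonAssocSemiring R] {n : ℕ} (hn : n ≠ 0)
    (h : n < ringChar R) : (n : R) ≠ 0 := fun h0 =>
  absurd (Nat.le_of_dvd (Nat.pos_of_ne_zero hn) ((ringChar.spec R n).1 h0)) (by omega)

theorem Matrix.rank_eq_card_iff_linearIndependent_row {R m n : Type*} [Field R] [Fintype m]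
    [Fintype n] (A : Matrix m n R) : A.rank = Fintype.card m ↔ LinearIndependent R A.row := by
  rw [A.rank_eq_finrank_span_row, linearIndependent_iff_card_eq_finrank_span, Set.finrank, eq_comm]

theorem Fin.sum_univ_mul_eq_sum_range_extend {R : Type*} [Semiring R] {m N : ℕ} (h : m ≤ N)
    (g : Fin m → R) (F : ℕ → R) :
    ∑ j : Fin m, g j * F j = ∑ j ∈ range N, Function.extend Fin.val g 0 j * F j := by
  rw [← sum_subset (range_subset_range.2 h), ← Fin.sum_univ_eq_sum_range]
  · simp [Fin.val_injective.extend_apply]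
  · intro j _ hj
    rw [Function.extend_apply' _ _ _ (by rintro ⟨j', rfl⟩; simp at hj), Pi.zero_apply, zero_mul]

section PowerSums

variable {K ι : Type*} [Field K] {s : Finset ι}

theorem Finset.eq_zero_of_sum_eq_zero_of_forall_eq_zero_or_eq
    (hK : ∀ n : ℕ, n ≠ 0 → n ≤ #s → (n : K) ≠ 0) {f : ι → K} {a : K}
    (hf : ∀ i ∈ s, f i = 0 ∨ f i = a) (hsum : ∑ i ∈ s, f i = 0) : ∀ i ∈ s, f i = 0 := by
  classical
  have hcount : (#(s.filter (f · = a)) : K) * a = 0 := calc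
    _ = ∑ i ∈ s, f i := by
      rw [← nsmul_eq_mul, ← sum_const, sum_filter]
      refine sum_congr rfl fun i hi => ?_
      rcases hf i hi with h | h <;> simp [h, eq_comm]
    _ = 0 := hsum
  intro i hi
  rcases mul_eq_zero.mp hcount with hcard | rfl
  · by_contra hfi
    have hmem : i ∈ s.filter (f · = a) := mem_filter.2 ⟨hi, (hf i hi).resolve_left hfi⟩
    exact hK _ (card_ne_zero_of_mem hmem) (card_filter_le _ _) hcard
  · exact (hf i hi).elim id id

theorem Finset.eq_zero_of_sum_pow_eq_zero_of_forall_eq_zero_or_eq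
    (hK : ∀ n : ℕ, n ≠ 0 → n ≤ #s → (n : K) ≠ 0) {y : ι → K} {r : K} {e : ℕ} (he : e ≠ 0)
    (hy : ∀ i ∈ s, y i = 0 ∨ y i = r) (hsum : ∑ i ∈ s, y i ^ e = 0) : ∀ i ∈ s, y i = 0 := by
  refine fun i hi => pow_eq_zero_iff he |>.mp <|
    eq_zero_of_sum_eq_zero_of_forall_eq_zero_or_eq hK (a := r ^ e) (fun i hi => ?_) hsum i hi
  rcases hy i hi with h | h <;> simp [h, he]

theorem Finset.eq_zero_of_cubic_eq_zero_of_sum_pow_eq_zero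
    (hK : ∀ n : ℕ, n ≠ 0 → n ≤ #s → (n : K) ≠ 0) {y : ι → K} {a b c : K}
    (habc : a ≠ 0 ∨ b ≠ 0 ∨ c ≠ 0) (hy : ∀ i ∈ s, a * y i + b * y i ^ 2 + c * y i ^ 3 = 0)
    (h3 : b ≠ 0 → ∑ i ∈ s, y i ^ 3 = 0) (h4 : c ≠ 0 → ∑ i ∈ s, y i ^ 4 = 0) :
    ∀ i ∈ s, y i = 0 := by
  rcases eq_or_ne c 0 with rfl | hc <;> rcases eq_or_ne b 0 with rfl | hb
  · have ha : a ≠ 0 := by tauto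
    intro i hi
    simpa [ha] using hy i hi
  · refine eq_zero_of_sum_pow_eq_zero_of_forall_eq_zero_or_eq hK (r := -a / b) three_ne_zero
      (fun i hi => ?_) (h3 hb)
    have : y i * (a + b * y i) = 0 := by linear_combination hy i hi
    rcases mul_eq_zero.mp this with h | h
    · exact .inl h
    · exact .inr (by field_simp; linear_combination h)
  · have hsq := eq_zero_of_sum_pow_eq_zero_of_forall_eq_zero_or_eq hK (y := (y · ^ 2))
      (r := -a / c) two_ne_zero (fun i hi => ?_) (by simpa [← pow_mul] using h4 hc)
    · exact fun i hi => pow_eq_zero_iff two_ne_zero |>.mp (hsq i hi)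
    have : y i * (a + c * y i ^ 2) = 0 := by linear_combination hy i hi
    rcases mul_eq_zero.mp this with h | h
    · exact .inl (by simp [h])
    · exact .inr (by field_simp; linear_combination h)
  · by_contra! hne
    obtain ⟨i₀, hi₀, hr⟩ := hne
    -- `c t² + b t + a = c (t - r) (t - t')` with `r := y i₀` and `r + t' = -b / c`
    set r := y i₀
    set t' := -b / c - r
    have hfac : ∀ i ∈ s, y i = 0 ∨ y i = r ∨ y i = t' := fun i hi => by
      have hyr : a + b * r + c * r ^ 2 = 0 := (mul_eq_zero.mp
        (by linear_combination hy i₀ hi₀ : r * (a + b * r + c * r ^ 2) = 0)).resolve_left hr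
      have hct : c * t' = -b - c * r := by simp only [t']; field_simp
      have : c * (y i * ((y i - r) * (y i - t'))) = 0 := by
        linear_combination hy i hi - y i * hyr - y i * (y i - r) * hct
      simpa [hc, sub_eq_zero] using this
    have hquart := eq_zero_of_sum_eq_zero_of_forall_eq_zero_or_eq hK
      (f := fun i => y i ^ 3 * (y i - t')) (a := r ^ 3 * (r - t')) (fun i hi => ?_) ?_
    · have hcube := eq_zero_of_sum_pow_eq_zero_of_forall_eq_zero_or_eq hK (r := t')
        three_ne_zero (fun i hi => ?_) (h3 hb)
      · exact hr (hcube i₀ hi₀)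
      simpa [sub_eq_zero] using hquart i hi
    · rcases hfac i hi with h | h | h <;> simp [h]
    · simp only [mul_sub, sum_sub_distrib, ← pow_succ, ← sum_mul, h4 hc, h3 hb]
      ring

end PowerSums

section Jacobian

variable {K : Type} {d k : ℕ}

def tailIndex (j : Fin (d - k)) : Fin d := ⟨k + j, by have := j.isLt; omega⟩

theorem exists_tailIndex_eq_of_le {i : Fin d} (hi : k ≤ i) : ∃ j : Fin (d - k), tailIndex j = i :=
  ⟨⟨i - k, by omega⟩, Fin.ext (by simp [tailIndex]; omega)⟩

theorem tailIndex_injective : Function.Injective (tailIndex (d := d) (k := k)) :=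
  fun j j' h => Fin.ext (by simpa [tailIndex] using congrArg Fin.val h)

variable [CommRing K]

theorem eval_hpoly (x : Fin d → K) (j : Fin (d - k)) :
    eval x (hpoly K d k j) =
      (∑ i : Fin d with i.val < k, x i ^ ((j : ℕ) + 2)) - x (tailIndex j) ^ ((j : ℕ) + 2) := by
  simp [hpoly, tailIndex, sum_filter, apply_ite (eval x)]

theorem jacH_apply (x : Fin d → K) (j : Fin (d - k)) (i : Fin d) :
    jacH K d k x j i =
      (if (i : ℕ) < k then ((j : ℕ) + 2 : K) * x i ^ ((j : ℕ) + 1) else 0) -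
        if tailIndex j = i then ((j : ℕ) + 2 : K) * x i ^ ((j : ℕ) + 1) else 0 := by
  simp only [jacH, hpoly, Matrix.of_apply, map_sub, map_sum, apply_ite (pderiv i), map_zero,
    pderiv_pow, pderiv_X, Pi.single_apply, mul_ite, mul_one, mul_zero, apply_ite (eval x),
    eval_mul, eval_pow, eval_X, map_natCast]
  rw [sum_eq_single i (fun i' _ hi' => by simp [hi']) (by simp)]
  change _ - ite (tailIndex j = i) _ _ = _
  obtain rfl | h := eq_or_ne (tailIndex j) i
  · simp [tailIndex]
  · simp [h]

theorem jacH_apply_of_lt (x : Fin d → K) (j : Fin (d - k)) {i : Fin d} (hi : (i : ℕ) < k) :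
    jacH K d k x j i = ((j : ℕ) + 2 : K) * x i ^ ((j : ℕ) + 1) := by
  have : tailIndex j ≠ i := fun h => by simp [← h, tailIndex] at hi
  simp [jacH_apply, hi, this]

theorem jacH_apply_tailIndex (x : Fin d → K) (j j' : Fin (d - k)) :
    jacH K d k x j (tailIndex j') =
      if j = j' then -(((j : ℕ) + 2 : K) * x (tailIndex j) ^ ((j : ℕ) + 1)) else 0 := by
  obtain rfl | h := eq_or_ne j j'
  · simp [jacH_apply, tailIndex]
  · have hk : ¬(tailIndex j' : ℕ) < k := by simp [tailIndex]
    simp [jacH_apply, hk, h, tailIndex_injective.ne h]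

theorem sum_smul_row_jacH_eq_zero_iff (x : Fin d → K) (g : Fin (d - k) → K) :
    ∑ j, g j • (jacH K d k x).row j = 0 ↔
      (∀ i : Fin d, (i : ℕ) < k → ∑ j, g j * (((j : ℕ) + 2 : K) * x i ^ ((j : ℕ) + 1)) = 0) ∧
        ∀ j, g j * (((j : ℕ) + 2 : K) * x (tailIndex j) ^ ((j : ℕ) + 1)) = 0 := by
  simp only [funext_iff, Finset.sum_apply, Pi.smul_apply, Matrix.row_apply, smul_eq_mul,
    Pi.zero_apply]
  constructor
  · intro h
    refine ⟨fun i hi => by simpa [jacH_apply_of_lt x _ hi] using h i, fun j => ?_⟩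
    simpa [jacH_apply_tailIndex] using h (tailIndex j)
  · rintro ⟨hhead, htail⟩ i
    rcases lt_or_ge (i : ℕ) k with hi | hi
    · simpa [jacH_apply_of_lt x _ hi] using hhead i hi
    · obtain ⟨j, rfl⟩ := exists_tailIndex_eq_of_le hi
      simp [jacH_apply_tailIndex, htail]

end Jacobian

section Smoothness

variable {K : Type} [Field K] {d k : ℕ}

theorem eq_zero_of_mem_Hset {x : Fin d → K} (hx : x ∈ Hset K d k)
    (hhead : ∀ i : Fin d, (i : ℕ) < k → x i = 0) : x = 0 := by
  funext i
  rcases lt_or_ge (i : ℕ) k with hi | hi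
  · exact hhead i hi
  · obtain ⟨j, rfl⟩ := exists_tailIndex_eq_of_le hi
    have := hx j
    rw [eval_hpoly, sum_eq_zero fun i hi => by simp [hhead i (mem_filter.1 hi).2], zero_sub,
      neg_eq_zero] at this
    exact pow_eq_zero_iff (by omega) |>.mp this

theorem sum_pow_eq_zero_of_mem_Hset_of_relation (hK : ∀ n : ℕ, n ≠ 0 → n ≤ d → (n : K) ≠ 0)
    (hk : k ≠ 0) {x : Fin d → K} (hx : x ∈ Hset K d k) {g : Fin (d - k) → K}
    (htail : ∀ j, g j * (((j : ℕ) + 2 : K) * x (tailIndex j) ^ ((j : ℕ) + 1)) = 0)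
    {j : Fin (d - k)} (hj : g j ≠ 0) : ∑ i : Fin d with i.val < k, x i ^ ((j : ℕ) + 2) = 0 := by
  have hcast : ((j : ℕ) + 2 : K) ≠ 0 := by
    exact_mod_cast hK ((j : ℕ) + 2) (by omega) (by have := j.isLt; omega)
  have htail_zero : x (tailIndex j) = 0 := pow_eq_zero_iff (by omega) |>.mp <|
    (mul_eq_zero.mp ((mul_eq_zero.mp (htail j)).resolve_left hj)).resolve_left hcast
  simpa [eval_hpoly, htail_zero] using hx j

theorem jacH_rank_eq_of_sub_le_three (hK : ∀ n : ℕ, n ≠ 0 → n ≤ d → (n : K) ≠ 0) (hk : k ≠ 0)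
    (hm : d - k ≤ 3) {x : Fin d → K} (hx : x ∈ Hset K d k) (hx0 : x ≠ 0) :
    (jacH K d k x).rank = d - k := by
  suffices LinearIndependent K (jacH K d k x).row by simpa using this.rank_matrix
  refine Fintype.linearIndependent_iff.2 fun g hg => ?_
  obtain ⟨hhead, htail⟩ := (sum_smul_row_jacH_eq_zero_iff x g).mp hg
  by_contra! hg0
  obtain ⟨j₀, hj₀⟩ := hg0
  set G := Function.extend Fin.val g 0
  have hG : ∀ j : Fin (d - k), G j = g j := Fin.val_injective.extend_apply g 0
  have hpow : ∀ j : ℕ, G j ≠ 0 → ∑ i : Fin d with i.val < k, x i ^ (j + 2) = 0 := by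
    intro j hj
    have hjm : j < d - k := by
      by_contra hjm
      exact hj (Function.extend_apply' _ _ _ (by rintro ⟨j', rfl⟩; omega))
    exact sum_pow_eq_zero_of_mem_Hset_of_relation hK hk hx htail (j := ⟨j, hjm⟩) (hG _ ▸ hj)
  have hroot : ∀ i : Fin d, (i : ℕ) < k →
      2 * G 0 * x i + 3 * G 1 * x i ^ 2 + 4 * G 2 * x i ^ 3 = 0 := fun i hi => by
    have := hhead i hi
    rw [Fin.sum_univ_mul_eq_sum_range_extend hm g (fun j => ((j : K) + 2) * x i ^ (j + 1))] at this
    simp only [sum_range_succ, sum_range_zero] at this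
    norm_num at this
    linear_combination this
  have habc : 2 * G 0 ≠ 0 ∨ 3 * G 1 ≠ 0 ∨ 4 * G 2 ≠ 0 := by
    have hcast : ((j₀ : ℕ) + 2 : K) ≠ 0 := by
      exact_mod_cast hK ((j₀ : ℕ) + 2) (by omega) (by have := j₀.isLt; omega)
    have h := mul_ne_zero hcast (hG j₀ ▸ hj₀)
    obtain h₀ | h₀ | h₀ : (j₀ : ℕ) = 0 ∨ (j₀ : ℕ) = 1 ∨ (j₀ : ℕ) = 2 := by omega
    all_goals rw [h₀] at h; norm_num at h ⊢; tauto
  have hS : ∀ n : ℕ, n ≠ 0 → n ≤ #(univ.filter fun i : Fin d => i.val < k) → (n : K) ≠ 0 :=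
    fun n hn hnS => hK n hn (hnS.trans ((card_filter_le _ _).trans (by simp)))
  refine hx0 (eq_zero_of_mem_Hset hx fun i hi => ?_)
  exact eq_zero_of_cubic_eq_zero_of_sum_pow_eq_zero hS habc
    (fun i hi => hroot i (mem_filter.1 hi).2) (fun hb => hpow 1 (right_ne_zero_of_mul hb))
    (fun hc => hpow 2 (right_ne_zero_of_mul hc)) i (mem_filter.2 ⟨mem_univ _, hi⟩)

end Smoothness

section Singularity

variable {K : Type} [Field K] {d k : ℕ}

theorem exists_mem_Hset_eqOn_head [IsAlgClosed K] (y : Fin d → K) :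
    ∃ x ∈ Hset K d k, ∀ i : Fin d, (i : ℕ) < k → x i = y i := by
  choose ρ hρ using fun j : Fin (d - k) =>
    IsAlgClosed.exists_pow_nat_eq (∑ i : Fin d with i.val < k, y i ^ ((j : ℕ) + 2))
      (n := (j : ℕ) + 2) (by omega)
  have hhead : ∀ i : Fin d, (i : ℕ) < k → Function.extend tailIndex ρ y i = y i := by
    intro i hi
    refine Function.extend_apply' _ _ _ ?_
    rintro ⟨j, rfl⟩
    simp [tailIndex] at hi
  refine ⟨Function.extend tailIndex ρ y, fun j => ?_, hhead⟩
  rw [eval_hpoly, tailIndex_injective.extend_apply, hρ, sub_eq_zero]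
  exact sum_congr rfl fun i hi => by rw [hhead i (mem_filter.1 hi).2]

theorem exists_jacH_rank_ne_of_four_le_sub [IsAlgClosed K] (hk : 2 ≤ k) (hm : 4 ≤ d - k) :
    ∃ x ∈ Hset K d k, x ≠ 0 ∧ (jacH K d k x).rank ≠ d - k := by
  obtain ⟨x, hx, hxy⟩ := exists_mem_Hset_eqOn_head (k := k)
    (fun i : Fin d => if (i : ℕ) = 0 then (1 : K) else if (i : ℕ) = 1 then -1 else 0)
  have hcube : ∀ i : Fin d, (i : ℕ) < k → x i ^ 3 = x i := fun i hi => by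
    rw [hxy i hi]; split_ifs <;> norm_num
  have hodd : ∀ j : Fin (d - k), Odd (j : ℕ) → x (tailIndex j) = 0 := by
    intro j hj
    have hsum : ∑ i : Fin d with i.val < k, x i ^ ((j : ℕ) + 2) = 0 := by
      rw [sum_eq_add_of_mem ⟨0, by omega⟩ ⟨1, by omega⟩ (by simp; omega) (by simp; omega)
        (by simp [Fin.ext_iff]) fun i hi hi01 => ?_]
      · rw [hxy _ (by simp; omega), hxy _ (by simp; omega)]
        simp [(hj.add_even even_two).neg_one_pow]
      · rw [hxy i (mem_filter.1 hi).2, if_neg (by simpa [Fin.ext_iff] using hi01.1),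
          if_neg (by simpa [Fin.ext_iff] using hi01.2), zero_pow (by omega)]
    have := hx j
    rw [eval_hpoly, hsum, zero_sub, neg_eq_zero] at this
    exact pow_eq_zero_iff (by omega) |>.mp this
  refine ⟨x, hx, fun h => by simpa [h] using hxy ⟨0, by omega⟩ (by simp; omega), fun hrank => ?_⟩
  set g : Fin (d - k) → K := fun j => if (j : ℕ) = 1 then 5 else if (j : ℕ) = 3 then -3 else 0
  have hrel : ∑ j, g j • (jacH K d k x).row j = 0 := by
    refine (sum_smul_row_jacH_eq_zero_iff x g).2 ⟨fun i hi => ?_, fun j => ?_⟩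
    · rw [sum_eq_add_of_mem ⟨1, by omega⟩ ⟨3, by omega⟩ (mem_univ _) (mem_univ _)
        (by simp [Fin.ext_iff]) fun j _ hj => ?_]
      · simp only [g]; norm_num
        linear_combination (-15 * x i) * hcube i hi
      · simp [g, Fin.ext_iff] at hj ⊢; simp [hj]
    · by_cases hj : (j : ℕ) = 1 ∨ (j : ℕ) = 3
      · rw [hodd j (by rcases hj with h | h <;> rw [h] <;> decide)]; simp
      · simp [g, not_or.1 hj]
  have hli := (jacH K d k x).rank_eq_card_iff_linearIndependent_row.1 (by simpa using hrank)
  have h1 := Fintype.linearIndependent_iff.1 hli g hrel ⟨1, by omega⟩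
  have h3 := Fintype.linearIndependent_iff.1 hli g hrel ⟨3, by omega⟩
  simp only [g] at h1 h3
  norm_num at h1 h3
  exact one_ne_zero (by linear_combination 2 * h1 - 3 * h3 : (1 : K) = 0)

end Singularity

/-- For every `2 ≤ k ≤ d−1`, if the characteristic is large enough
(depending only on `d`), then the Jacobian of the system defining `H̄_k` has rank `d−k`
at every nonzero point of `H̄_k` (smoothness away from the origin) iff `d−k ∈ {1,2,3}`. -/
theorem Hbar_smooth_iff (d : ℕ) (hd : 3 ≤ d) :
    ∃ c : ℕ, 0 < c ∧ ∀ k : ℕ, 2 ≤ k → k ≤ d - 1 →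
      ∀ (F : Type) [Field F] [Fintype F], c < ringChar F →
        ((∀ x ∈ Hset (AlgebraicClosure F) d k, x ≠ 0 →
            (jacH (AlgebraicClosure F) d k x).rank = d - k) ↔
          (d - k = 1 ∨ d - k = 2 ∨ d - k = 3)) := by
  refine ⟨d, by omega, fun k hk hkd F _ _ hchar => ⟨fun hsmooth => ?_, fun hm x hx hx0 => ?_⟩⟩
  · by_contra! hm
    obtain ⟨x, hx, hx0, hrank⟩ :=
      exists_jacH_rank_ne_of_four_le_sub (K := AlgebraicClosure F) (d := d) hk (by omega)
    exact hrank (hsmooth x hx hx0)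
  · have hK : ∀ n : ℕ, n ≠ 0 → n ≤ d → (n : AlgebraicClosure F) ≠ 0 := fun n hn hnd =>
      Nat.cast_ne_zero_of_lt_ringChar hn (by rw [← Algebra.ringChar_eq F]; omega)
    exact jacH_rank_eq_of_sub_le_three hK (by omega) (by omega) hx hx0
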